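/- Let D be a Banach space, ε > 0, and K, L ⊆ D* nonempty weak-*-compact sets such that sup{ d(x, L) : x ∈ K } ≤ ε/8, where d(x, L) = inf{‖x − z‖ : z ∈ L}. Then for every ordinal γ, if s_ε^γ(K) ≠ ∅ then s_{ε/4}^γ(L) ≠ ∅ (that is, Sz_ε(K) ≤ Sz_{ε/4}(L)). -/

import Mathlib

open NormedSpace Metric
open scoped Ordinal Pointwise

noncomputable section

/-- A subset of the norm dual is weak-* open if it is open when transported to the weak-* dual. -/
def IsWeakStarOpen {E : Type*} [NormedAddCommGroup E] [NormedSpace ℝ E]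
    (V : Set (StrongDual ℝ E)) : Prop :=
  IsOpen (StrongDual.toWeakDual '' V : Set (WeakDual ℝ E))

/-- A subset of the norm dual is weak-* compact if it is compact when transported to the
weak-* dual. -/
def IsWeakStarCompact {E : Type*} [NormedAddCommGroup E] [NormedSpace ℝ E]
    (K : Set (StrongDual ℝ E)) : Prop :=
  IsCompact (StrongDual.toWeakDual '' K : Set (WeakDual ℝ E))

/-- The Szlenk derivation `s_ε(K)`. -/
def szlenkDeriv {E : Type*} [NormedAddCommGroup E] [NormedSpace ℝ E]
    (ε : ℝ) (K : Set (StrongDual ℝ E)) : Set (StrongDual ℝ E) :=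
  {x | x ∈ K ∧ ∀ V : Set (StrongDual ℝ E), IsWeakStarOpen V → x ∈ V → ε < Metric.diam (K ∩ V)}

/-- The transfinite iterates `s_ε^α(K)` of the Szlenk derivation. -/
noncomputable def szlenkIter {E : Type*} [NormedAddCommGroup E] [NormedSpace ℝ E]
    (ε : ℝ) (K : Set (StrongDual ℝ E)) (α : Ordinal) : Set (StrongDual ℝ E) :=
  Ordinal.limitRecOn α K (fun _ S => szlenkDeriv ε S)
    (fun o _ ih => ⋂ (β : Ordinal) (h : β < o), ih β h)

-- ============ auxiliary development ============
open Set Filter Topology Bornology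

section Aux
variable {D : Type*} [NormedAddCommGroup D] [NormedSpace ℝ D]

/-- The weak-* topology, as a topology on the normed dual. -/
noncomputable def wsT (D : Type*) [NormedAddCommGroup D] [NormedSpace ℝ D] :
    TopologicalSpace (StrongDual ℝ D) := (inferInstance : TopologicalSpace (WeakDual ℝ D))

lemma toWeakDual_image (V : Set (StrongDual ℝ D)) :
    (StrongDual.toWeakDual '' V : Set (WeakDual ℝ D)) = (V : Set (StrongDual ℝ D)) := by
  ext x; exact ⟨fun ⟨y, hy, h⟩ => h ▸ hy, fun h => ⟨x, h, rfl⟩⟩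

lemma isWeakStarOpen_iff' (V : Set (StrongDual ℝ D)) :
    IsWeakStarOpen V ↔ IsOpen[wsT D] V := by
  unfold IsWeakStarOpen; rw [toWeakDual_image]; exact Iff.rfl

lemma isWeakStarCompact_iff' (K : Set (StrongDual ℝ D)) :
    IsWeakStarCompact K ↔ @IsCompact _ (wsT D) K := by
  unfold IsWeakStarCompact; rw [toWeakDual_image]; exact Iff.rfl

lemma wsT_t2 : @T2Space (StrongDual ℝ D) (wsT D) := (inferInstance : T2Space (WeakDual ℝ D))

lemma wsT_closedBall_closed (x : StrongDual ℝ D) (r : ℝ) :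
    IsClosed[wsT D] (closedBall x r) := WeakDual.isClosed_closedBall x r

lemma wsT_continuousSub : @ContinuousSub (StrongDual ℝ D) (wsT D) _ :=
  (inferInstance : ContinuousSub (WeakDual ℝ D))

lemma wsT_eval_continuous (v : D) :
    Continuous[wsT D, _] (fun f : StrongDual ℝ D => f v) :=
  WeakBilin.eval_continuous (topDualPairing ℝ D) v

/-- A weak-*-compact set in the dual of a Banach space is norm-bounded. -/
lemma wsCompact_isBounded [CompleteSpace D] {L : Set (StrongDual ℝ D)}
    (hL : @IsCompact _ (wsT D) L) : IsBounded L := by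
  have h : ∀ v : D, ∃ C, ∀ i : L, ‖(i : StrongDual ℝ D) v‖ ≤ C := by
    intro v
    have himg : IsCompact ((fun f : StrongDual ℝ D => f v) '' L) :=
      @IsCompact.image _ _ (wsT D) _ _ _ hL (wsT_eval_continuous v)
    obtain ⟨C, hC⟩ := isBounded_iff_forall_norm_le.1 himg.isBounded
    exact ⟨C, fun i => hC _ (mem_image_of_mem _ i.2)⟩
  obtain ⟨C', hC'⟩ := banach_steinhaus (g := fun i : L => (i : StrongDual ℝ D)) h
  rw [isBounded_iff_forall_norm_le]
  exact ⟨C', fun f hf => hC' ⟨f, hf⟩⟩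

lemma mem_szlenkDeriv_iff {ε : ℝ} {S : Set (StrongDual ℝ D)} {x : StrongDual ℝ D} :
    x ∈ szlenkDeriv ε S ↔
      x ∈ S ∧ ∀ V, IsOpen[wsT D] V → x ∈ V → ε < Metric.diam (S ∩ V) := by
  unfold szlenkDeriv
  simp only [Set.mem_setOf_eq, isWeakStarOpen_iff']

lemma szlenkDeriv_subset {ε : ℝ} {S : Set (StrongDual ℝ D)} : szlenkDeriv ε S ⊆ S :=
  fun _ hx => hx.1

lemma szlenkDeriv_eq {ε : ℝ} (S : Set (StrongDual ℝ D)) :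
    szlenkDeriv ε S =
      S \ ⋃₀ {V | IsOpen[wsT D] V ∧ Metric.diam (S ∩ V) ≤ ε} := by
  ext x
  rw [mem_szlenkDeriv_iff]
  constructor
  · rintro ⟨hxS, h⟩
    refine ⟨hxS, ?_⟩
    rintro ⟨V, ⟨hVo, hVd⟩, hxV⟩
    exact absurd hVd (not_le.2 (h V hVo hxV))
  · rintro ⟨hxS, h⟩
    refine ⟨hxS, fun V hVo hxV => not_le.1 fun hle => h ⟨V, ⟨hVo, hle⟩, hxV⟩⟩

lemma szlenkDeriv_wsCompact {ε : ℝ} {S : Set (StrongDual ℝ D)}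
    (hS : @IsCompact _ (wsT D) S) : @IsCompact _ (wsT D) (szlenkDeriv ε S) := by
  rw [szlenkDeriv_eq]
  refine @IsCompact.diff _ (wsT D) _ _ hS ?_
  exact @isOpen_sUnion _ (wsT D) _ (fun V hV => hV.1)

lemma szlenkIter_zero (ε : ℝ) (K : Set (StrongDual ℝ D)) : szlenkIter ε K 0 = K :=
  Ordinal.limitRecOn_zero _ _ _

lemma szlenkIter_succ (ε : ℝ) (K : Set (StrongDual ℝ D)) (γ : Ordinal) :
    szlenkIter ε K (Order.succ γ) = szlenkDeriv ε (szlenkIter ε K γ) :=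
  Ordinal.limitRecOn_succ _ _ _ _

lemma szlenkIter_limit (ε : ℝ) (K : Set (StrongDual ℝ D)) {γ : Ordinal} (hγ : Order.IsSuccLimit γ) :
    szlenkIter ε K γ = ⋂ (β : Ordinal) (_ : β < γ), szlenkIter ε K β :=
  Ordinal.limitRecOn_limit _ _ _ _ hγ

lemma szlenkIter_anti (ε : ℝ) (K : Set (StrongDual ℝ D)) :
    ∀ γ β : Ordinal, β ≤ γ → szlenkIter ε K γ ⊆ szlenkIter ε K β := by
  intro γ
  induction γ using Ordinal.limitRecOn with
  | zero => intro β hβ; rw [nonpos_iff_eq_zero.1 hβ]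
  | add_one γ ih =>
    rw [Ordinal.add_one_eq_succ]
    intro β hβ
    rcases eq_or_lt_of_le hβ with h | h
    · rw [h]
    · rw [szlenkIter_succ]
      exact (szlenkDeriv_subset.trans (ih β (Order.lt_succ_iff.1 h)))
  | limit γ hγ ih =>
    intro β hβ
    rcases eq_or_lt_of_le hβ with h | h
    · rw [h]
    · rw [szlenkIter_limit ε K hγ]
      exact fun x hx => by
        have := Set.mem_iInter₂.1 hx β h
        exact this

lemma szlenkIter_wsCompact {ε : ℝ} {K : Set (StrongDual ℝ D)}
    (hK : @IsCompact _ (wsT D) K) (γ : Ordinal) :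
    @IsCompact _ (wsT D) (szlenkIter ε K γ) := by
  induction γ using Ordinal.limitRecOn with
  | zero => rwa [szlenkIter_zero]
  | add_one γ ih => rw [Ordinal.add_one_eq_succ, szlenkIter_succ]; exact szlenkDeriv_wsCompact ih
  | limit γ hγ ih =>
    rw [szlenkIter_limit ε K hγ]
    haveI := wsT_t2 (D := D)
    have hclosed : IsClosed[wsT D] (⋂ (β : Ordinal) (_ : β < γ), szlenkIter ε K β) :=
      @isClosed_iInter _ _ (wsT D) _ fun β =>
        @isClosed_iInter _ _ (wsT D) _ fun hβ => @IsCompact.isClosed _ (wsT D) wsT_t2 _ (ih β hβ)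
    refine @IsCompact.of_isClosed_subset _ (wsT D) _ _ (ih 0 hγ.pos) hclosed ?_
    exact fun x hx => Set.mem_iInter₂.1 hx 0 hγ.pos

/-- The key derivation step: if every point of `S` is within `ε/8` of `T`, then every point of
`s_ε(S)` is within `ε/8` of `s_{ε/4}(T)`. -/
lemma szlenkDeriv_approx {ε : ℝ} (hε : 0 < ε) {S T : Set (StrongDual ℝ D)}
    (hS : @IsCompact _ (wsT D) S) (hT : @IsCompact _ (wsT D) T) (hTb : IsBounded T)
    (hST : ∀ u ∈ S, ∃ v ∈ T, dist u v ≤ ε / 8) :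
    ∀ x ∈ szlenkDeriv ε S, ∃ y ∈ szlenkDeriv (ε / 4) T, dist x y ≤ ε / 8 := by
  letI : TopologicalSpace (StrongDual ℝ D) := wsT D
  haveI : T2Space (StrongDual ℝ D) := wsT_t2
  haveI : ContinuousSub (StrongDual ℝ D) := wsT_continuousSub
  intro x hx
  rw [mem_szlenkDeriv_iff] at hx
  obtain ⟨hxS, hxd⟩ := hx
  set ι := {V : Set (StrongDual ℝ D) // IsOpen V ∧ x ∈ V} with hι
  haveI : Nonempty ι := ⟨⟨Set.univ, isOpen_univ, Set.mem_univ x⟩⟩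
  set P : ι → Set (StrongDual ℝ D × StrongDual ℝ D) := fun V =>
    {p | (p.1 ∈ S ∧ p.1 ∈ V.1) ∧ p.2 ∈ T ∧ ε / 2 < dist p.1 x ∧ dist p.1 p.2 ≤ ε / 8}
    with hP
  have hPne : ∀ V : ι, (P V).Nonempty := by
    intro V
    have hd := hxd V.1 V.2.1 V.2.2
    have hex : ∃ a ∈ S ∩ V.1, ∃ b ∈ S ∩ V.1, ε < dist a b := by
      by_contra h
      push_neg at h
      exact absurd (Metric.diam_le_of_forall_dist_le hε.le fun a ha b hb => h a ha b hb)
        (not_le.2 hd)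
    obtain ⟨a, ha, b, hb, hab⟩ := hex
    have h2 : ε / 2 < dist a x ∨ ε / 2 < dist b x := by
      by_contra h
      push_neg at h
      have htr := dist_triangle a x b
      rw [dist_comm x b] at htr
      linarith [h.1, h.2]
    rcases h2 with h2 | h2
    · obtain ⟨v, hv, hv8⟩ := hST a ha.1
      exact ⟨(a, v), ⟨ha.1, ha.2⟩, hv, h2, hv8⟩
    · obtain ⟨v, hv, hv8⟩ := hST b hb.1
      exact ⟨(b, v), ⟨hb.1, hb.2⟩, hv, h2, hv8⟩
  set F : Filter (StrongDual ℝ D × StrongDual ℝ D) := ⨅ V : ι, Filter.principal (P V) with hF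
  have hPdir : Directed (· ≥ ·) fun V : ι => Filter.principal (P V) := by
    intro V W
    refine ⟨⟨V.1 ∩ W.1, V.2.1.inter W.2.1, V.2.2, W.2.2⟩,
      Filter.principal_mono.2 ?_, Filter.principal_mono.2 ?_⟩
    · rintro ⟨u, v⟩ ⟨⟨h1, h2⟩, h3⟩
      exact ⟨⟨h1, h2.1⟩, h3⟩
    · rintro ⟨u, v⟩ ⟨⟨h1, h2⟩, h3⟩
      exact ⟨⟨h1, h2.2⟩, h3⟩
  haveI hFne : F.NeBot :=
    Filter.iInf_neBot_of_directed hPdir fun V => Filter.principal_neBot_iff.2 (hPne V)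
  set V₀ : ι := ⟨Set.univ, isOpen_univ, Set.mem_univ x⟩ with hV₀
  have hFle : F ≤ Filter.principal (S ×ˢ T) := by
    refine (iInf_le _ V₀).trans (Filter.principal_mono.2 ?_)
    rintro ⟨u, v⟩ ⟨⟨h1, _⟩, h3, _⟩
    exact ⟨h1, h3⟩
  obtain ⟨⟨x', y⟩, hpmem, hp⟩ := (hS.prod hT) hFle
  have key : ∀ N ∈ 𝓝 (x', y), ∀ V : ι, ∃ q, q ∈ P V ∧ q ∈ N := by
    intro N hN V
    have hmem : P V ∩ N ∈ 𝓝 (x', y) ⊓ F :=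
      Filter.inter_mem (Filter.mem_inf_of_right
        (Filter.mem_iInf_of_mem V (Filter.mem_principal_self _)))
        (Filter.mem_inf_of_left hN)
    obtain ⟨q, hq⟩ := hp.neBot.nonempty_of_mem hmem
    exact ⟨q, hq.1, hq.2⟩
  have hx'x : x' = x := by
    by_contra hne
    obtain ⟨U₁, U₂, hU₁, hU₂, hx'U, hxU, hdisj⟩ := t2_separation hne
    obtain ⟨q, hqP, hqN⟩ := key (U₁ ×ˢ Set.univ)
      (prod_mem_nhds (hU₁.mem_nhds hx'U) Filter.univ_mem) ⟨U₂, hU₂, hxU⟩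
    exact Set.disjoint_left.1 hdisj hqN.1 hqP.1.2
  subst hx'x
  have hCclosed : IsClosed {p : StrongDual ℝ D × StrongDual ℝ D | dist p.1 p.2 ≤ ε / 8} := by
    have heq : {p : StrongDual ℝ D × StrongDual ℝ D | dist p.1 p.2 ≤ ε / 8} =
        (fun p : StrongDual ℝ D × StrongDual ℝ D => p.1 - p.2) ⁻¹' closedBall 0 (ε / 8) := by
      ext p
      simp [Metric.mem_closedBall, dist_eq_norm, dist_zero_right]
    rw [heq]
    exact (wsT_closedBall_closed 0 (ε / 8)).preimage continuous_sub
  have hdxy : dist x' y ≤ ε / 8 := by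
    have hle2 : F ≤ Filter.principal {p : StrongDual ℝ D × StrongDual ℝ D | dist p.1 p.2 ≤ ε / 8} :=
      (iInf_le _ V₀).trans (Filter.principal_mono.2 fun p hp => hp.2.2.2)
    have hcl := mem_closure_iff_clusterPt.2 (hp.mono hle2)
    rw [hCclosed.closure_eq] at hcl
    exact hcl
  refine ⟨y, ?_, hdxy⟩
  rw [mem_szlenkDeriv_iff]
  refine ⟨hpmem.2, fun W hW hyW => ?_⟩
  obtain ⟨q, hqP, hqN⟩ := key (Set.univ ×ˢ W)
    (prod_mem_nhds Filter.univ_mem (hW.mem_nhds hyW)) V₀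
  have h4 := dist_triangle4 q.1 q.2 y x'
  rw [dist_comm y x'] at h4
  have hvy : ε / 4 < dist q.2 y := by linarith [hqP.2.2.1, hqP.2.2.2]
  have hle3 : dist q.2 y ≤ Metric.diam (T ∩ W) :=
    Metric.dist_le_diam_of_mem (hTb.subset Set.inter_subset_left)
      ⟨hqP.2.1, hqN.2⟩ ⟨hpmem.2, hyW⟩
  linarith

end Aux

section Main
variable {D : Type*} [NormedAddCommGroup D] [NormedSpace ℝ D]

lemma szlenkIter_subset_base (ε : ℝ) (K : Set (StrongDual ℝ D)) (γ : Ordinal) :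
    szlenkIter ε K γ ⊆ K := by
  have h := szlenkIter_anti ε K γ 0 zero_le
  rwa [szlenkIter_zero] at h

lemma main_induction [CompleteSpace D]
    (ε : ℝ) (hε : 0 < ε) (K L : Set (StrongDual ℝ D)) (hLne : L.Nonempty)
    (hK : @IsCompact _ (wsT D) K) (hL : @IsCompact _ (wsT D) L)
    (hdist : ∀ x ∈ K, Metric.infDist x L ≤ ε / 8) :
    ∀ γ : Ordinal, ∀ x ∈ szlenkIter ε K γ,
      ∃ y ∈ szlenkIter (ε / 4) L γ, dist x y ≤ ε / 8 := by
  intro γ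
  induction γ using Ordinal.limitRecOn with
  | zero =>
    rw [szlenkIter_zero, szlenkIter_zero]
    intro x hx
    letI : TopologicalSpace (StrongDual ℝ D) := wsT D
    haveI : T2Space (StrongDual ℝ D) := wsT_t2
    set C : ℕ → Set (StrongDual ℝ D) := fun n => L ∩ closedBall x (ε / 8 + 1 / (n + 1)) with hC
    have hCne : ∀ n, (C n).Nonempty := by
      intro n
      have hlt : Metric.infDist x L < ε / 8 + 1 / (n + 1) :=
        lt_of_le_of_lt (hdist x hx) (lt_add_of_pos_right _ (by positivity))
      obtain ⟨y, hyL, hyd⟩ := (Metric.infDist_lt_iff hLne).1 hlt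
      exact ⟨y, hyL, Metric.mem_closedBall.2 (by rw [dist_comm]; exact hyd.le)⟩
    have hCc : ∀ n, IsCompact (C n) := fun n =>
      hL.inter_right (wsT_closedBall_closed _ _)
    have hmono : ∀ m n : ℕ, m ≤ n → (1 : ℝ) / (n + 1) ≤ 1 / (m + 1) := by
      intro m n hmn
      apply one_div_le_one_div_of_le (by positivity)
      have : (m : ℝ) ≤ n := Nat.cast_le.2 hmn
      linarith
    have hCd : Directed (· ⊇ ·) C := by
      intro m n
      exact ⟨max m n, Set.inter_subset_inter_right _ (Metric.closedBall_subset_closedBall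
          (by linarith [hmono m (max m n) (le_max_left m n)])),
        Set.inter_subset_inter_right _ (Metric.closedBall_subset_closedBall
          (by linarith [hmono n (max m n) (le_max_right m n)]))⟩
    obtain ⟨y, hy⟩ := IsCompact.nonempty_iInter_of_directed_nonempty_isCompact_isClosed C hCd
      hCne hCc fun n => (hCc n).isClosed
    refine ⟨y, (Set.mem_iInter.1 hy 0).1, ?_⟩
    by_contra hcon
    push_neg at hcon
    obtain ⟨n, hn⟩ := exists_nat_one_div_lt (sub_pos.2 hcon)
    have hyn := (Set.mem_iInter.1 hy n).2
    rw [Metric.mem_closedBall, dist_comm] at hyn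
    linarith
  | add_one γ ih =>
    rw [Ordinal.add_one_eq_succ, szlenkIter_succ, szlenkIter_succ]
    have hTsub : szlenkIter (ε / 4) L γ ⊆ L := szlenkIter_subset_base _ _ _
    exact szlenkDeriv_approx hε (szlenkIter_wsCompact hK γ) (szlenkIter_wsCompact hL γ)
      ((wsCompact_isBounded hL).subset hTsub) ih
  | limit γ hγ ih =>
    intro x hx
    rw [szlenkIter_limit ε K hγ] at hx
    letI : TopologicalSpace (StrongDual ℝ D) := wsT D
    haveI : T2Space (StrongDual ℝ D) := wsT_t2
    set ι' := {β : Ordinal // β < γ} with hι'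
    haveI : Nonempty ι' := ⟨⟨0, hγ.pos⟩⟩
    set C : ι' → Set (StrongDual ℝ D) := fun β =>
      szlenkIter (ε / 4) L β.1 ∩ closedBall x (ε / 8) with hC
    have hCne : ∀ β : ι', (C β).Nonempty := by
      intro β
      obtain ⟨y, hy, hd⟩ := ih β.1 β.2 x (Set.mem_iInter₂.1 hx β.1 β.2)
      exact ⟨y, hy, Metric.mem_closedBall.2 (by rwa [dist_comm] at hd)⟩
    have hCc : ∀ β : ι', IsCompact (C β) := fun β =>
      (szlenkIter_wsCompact hL β.1).inter_right (wsT_closedBall_closed _ _)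
    have hCd : Directed (· ⊇ ·) C := by
      intro β₁ β₂
      refine ⟨⟨max β₁.1 β₂.1, max_lt β₁.2 β₂.2⟩,
        Set.inter_subset_inter_left _ (szlenkIter_anti _ _ _ _ (le_max_left _ _)),
        Set.inter_subset_inter_left _ (szlenkIter_anti _ _ _ _ (le_max_right _ _))⟩
    obtain ⟨y, hy⟩ := IsCompact.nonempty_iInter_of_directed_nonempty_isCompact_isClosed C hCd
      hCne hCc fun β => (hCc β).isClosed
    refine ⟨y, ?_, ?_⟩
    · rw [szlenkIter_limit (ε / 4) L hγ]
      exact Set.mem_iInter₂.2 fun β hβ => (Set.mem_iInter.1 hy ⟨β, hβ⟩).1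
    · have := (Set.mem_iInter.1 hy ⟨0, hγ.pos⟩).2
      rw [Metric.mem_closedBall] at this
      rwa [dist_comm]

end Main


/-- `Sz(K) ≤ γ` : the `γ`-th Szlenk derivative of `K` is empty for every `ε > 0`. -/
def SzLE {E : Type*} [NormedAddCommGroup E] [NormedSpace ℝ E]
    (K : Set (StrongDual ℝ E)) (γ : Ordinal) : Prop :=
  ∀ ε : ℝ, 0 < ε → szlenkIter ε K γ = ∅

/-- The image of a set under the adjoint of an operator. -/
def adjImage {E F : Type*} [NormedAddCommGroup E] [NormedSpace ℝ E]
    [NormedAddCommGroup F] [NormedSpace ℝ F] (T : E →L[ℝ] F) (K : Set (StrongDual ℝ F)) :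
    Set (StrongDual ℝ E) :=
  (fun g : StrongDual ℝ F => g.comp T) '' K

/-- `Sz(T) ≤ γ` for an operator `T`. -/
def SzOpLE {E F : Type*} [NormedAddCommGroup E] [NormedSpace ℝ E]
    [NormedAddCommGroup F] [NormedSpace ℝ F] (T : E →L[ℝ] F) (γ : Ordinal) : Prop :=
  SzLE (adjImage T (closedBall (0 : StrongDual ℝ F) 1)) γ

/-- `Sz(E) ≤ γ` for a Banach space `E`. -/
def SzSpaceLE (E : Type*) [NormedAddCommGroup E] [NormedSpace ℝ E] (γ : Ordinal) : Prop :=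
  SzLE (closedBall (0 : StrongDual ℝ E) 1) γ

/-- If `K, L ⊆ D*` are nonempty weak-*-compact sets with `sup{d(x, L) : x ∈ K} ≤ ε/8`,
then for every ordinal `γ`, nonemptiness of `s_ε^γ(K)` implies nonemptiness of
`s_{ε/4}^γ(L)`; that is, `Sz_ε(K) ≤ Sz_{ε/4}(L)`. -/
theorem szlenkIter_nonempty_of_infDist_le
    {D : Type*} [NormedAddCommGroup D] [NormedSpace ℝ D] [CompleteSpace D]
    (ε : ℝ) (hε : 0 < ε) (K L : Set (StrongDual ℝ D)) (hKne : K.Nonempty) (hLne : L.Nonempty)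
    (hK : IsWeakStarCompact K) (hL : IsWeakStarCompact L)
    (hdist : ∀ x ∈ K, Metric.infDist x L ≤ ε / 8) :
    ∀ γ : Ordinal, (szlenkIter ε K γ).Nonempty → (szlenkIter (ε / 4) L γ).Nonempty := by
  intro γ hne
  obtain ⟨x, hx⟩ := hne
  obtain ⟨y, hy, -⟩ := main_induction ε hε K L hLne
    ((isWeakStarCompact_iff' K).1 hK) ((isWeakStarCompact_iff' L).1 hL) hdist γ x hx
  exact ⟨y, hy⟩
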